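/- Let k* > 0, a > 0, M > 0, and let W₁ : ℝ → ℝ be measurable with |W₁(ξ)| ≤ M·e^{−a ξ²} for all ξ ∈ ℝ. For m, n ∈ ℤ define J_{m,n} = ∫_{−∞}^0 ∫_{log(1−e^Y)}^{∞} e^{(Y−Z)/2} W₁(Y−Z) e^{i m k* Y} e^{i n k* Z} dZ dY. Then there exists a constant C, depending only on k* and a, such that |J_{m,n}| ≤ C·M/(1 + |m+n|) for all m, n ∈ ℤ. -/

import Mathlib

open MeasureTheory Real Set

/-- The interaction coefficients
`J_{m,n} = ∫_{−∞}^0 ∫_{log(1−e^Y)}^{∞} e^{(Y−Z)/2} W₁(Y−Z) e^{imk*Y} e^{ink*Z} dZ dY`. -/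
noncomputable def coagJmn (W : ℝ → ℝ) (k : ℝ) (m n : ℤ) : ℂ :=
  ∫ Y in Set.Iio (0 : ℝ), ∫ Z in Set.Ioi (Real.log (1 - Real.exp Y)),
    ((Real.exp ((Y - Z) / 2) * W (Y - Z) : ℝ) : ℂ) *
      Complex.exp (Complex.I * (((m : ℝ) * k : ℝ) : ℂ) * (Y : ℂ)) *
      Complex.exp (Complex.I * (((n : ℝ) * k : ℝ) : ℂ) * (Z : ℂ))

/-- Gaussian with a linear term is integrable. -/
lemma coag_gauss_int (a c : ℝ) (ha : 0 < a) :
    Integrable (fun ξ : ℝ => Real.exp (c * ξ - a * ξ ^ 2)) := by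
  have h : (fun ξ : ℝ => Real.exp (c * ξ - a * ξ ^ 2))
      = fun ξ => Real.exp (c ^ 2 / (4 * a)) * Real.exp (-a * (ξ - c / (2 * a)) ^ 2) := by
    funext ξ; rw [← Real.exp_add]; congr 1; field_simp; ring
  rw [h]
  exact ((integrable_exp_neg_mul_sq ha).comp_sub_right _).const_mul _

/-- Substitution `ξ = Y - Z` in a set integral. -/
lemma coag_sub (g : ℝ → ℂ) (Y c : ℝ) :
    ∫ Z in Ioi c, g (Y - Z) = ∫ ξ in Iio (Y - c), g ξ := by
  have hmp : MeasurePreserving (fun Z : ℝ => Y - Z) volume volume :=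
    Measure.measurePreserving_sub_left volume Y
  have hemb : MeasurableEmbedding (fun Z : ℝ => Y - Z) :=
    (MeasurableEquiv.subLeft Y).measurableEmbedding
  have hpre : (fun Z : ℝ => Y - Z) ⁻¹' (Iio (Y - c)) = Ioi c := by
    ext Z; simp only [mem_preimage, mem_Iio, mem_Ioi]; constructor <;> intro <;> linarith
  rw [← hmp.setIntegral_preimage_emb hemb g (Iio (Y - c)), hpre]

lemma coag_exp_int (K b : ℝ) (hK : K ≠ 0) (hb : b ≤ 0) :
    ∫ Y in Ioo b (0:ℝ), Complex.exp (Complex.I * K * Y)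
      = (1 - Complex.exp (Complex.I * K * b)) / (Complex.I * K) := by
  rw [← integral_Ioc_eq_integral_Ioo, ← intervalIntegral.integral_of_le hb]
  rw [integral_exp_mul_complex (by simp [Complex.ext_iff, hK] : (Complex.I * (K:ℂ)) ≠ 0)]
  simp

set_option maxHeartbeats 1000000 in
/-- for `k* > 0`, `a > 0`, there is a constant `C` (depending only on
`k*` and `a`) such that for every `M > 0` and every measurable `W₁` with
`|W₁(ξ)| ≤ M e^{−aξ²}`, one has `|J_{m,n}| ≤ C·M/(1+|m+n|)` for all `m,n ∈ ℤ`. -/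
theorem stmt_13 (kstar a : ℝ) (hk : 0 < kstar) (ha : 0 < a) :
    ∃ C : ℝ, ∀ M : ℝ, 0 < M → ∀ W₁ : ℝ → ℝ, Measurable W₁ →
      (∀ ξ : ℝ, |W₁ ξ| ≤ M * Real.exp (-a * ξ ^ 2)) →
      ∀ m n : ℤ, ‖coagJmn W₁ kstar m n‖ ≤
        C * M / (1 + |((m + n : ℤ) : ℝ)|) := by
  set I₁ : ℝ := ∫ ξ : ℝ, Real.exp ((-(1/2)) * ξ - a * ξ ^ 2) with hI₁
  set I₂ : ℝ := ∫ ξ : ℝ, Real.exp ((1/2) * ξ - a * ξ ^ 2) with hI₂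
  have hI₁int := coag_gauss_int a (-(1/2)) ha
  have hI₂int := coag_gauss_int a (1/2) ha
  have hI₁0 : 0 ≤ I₁ := integral_nonneg fun ξ => (Real.exp_pos _).le
  have hI₂0 : 0 ≤ I₂ := integral_nonneg fun ξ => (Real.exp_pos _).le
  refine ⟨I₁ + 4 / kstar * I₂, ?_⟩
  intro M hM W hW hWb m n
  -- notation
  set K : ℝ := ((m + n : ℤ) : ℝ) * kstar with hK
  set φ : ℝ → ℂ := fun ξ => ((Real.exp (ξ / 2) * W ξ : ℝ) : ℂ) *
      Complex.exp ((-(((n : ℝ) * kstar) * ξ) : ℝ) * Complex.I) with hφ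
  set h : ℝ → ℝ := fun ξ => -Real.log (1 + Real.exp (-ξ)) with hh
  set F : ℝ × ℝ → ℂ := fun p =>
    Set.indicator {q : ℝ × ℝ | q.1 < 0 ∧ h q.2 < q.1}
      (fun q => φ q.2 * Complex.exp (((K * q.1 : ℝ) : ℂ) * Complex.I)) p with hF
  -- basic facts about h
  have hhneg : ∀ ξ : ℝ, h ξ < 0 := by
    intro ξ
    have : 0 < Real.log (1 + Real.exp (-ξ)) :=
      Real.log_pos (by nlinarith [Real.exp_pos (-ξ)])
    simp only [hh]; linarith
  have hhle : ∀ ξ : ℝ, -h ξ ≤ Real.exp (-ξ) := by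
    intro ξ
    have := Real.log_le_sub_one_of_pos (x := 1 + Real.exp (-ξ)) (by positivity)
    simp only [hh, neg_neg]; linarith
  -- norm of φ
  have hφnorm : ∀ ξ : ℝ, ‖φ ξ‖ ≤ M * Real.exp (ξ / 2 - a * ξ ^ 2) := by
    intro ξ
    have h1 : ‖φ ξ‖ = Real.exp (ξ / 2) * |W ξ| := by
      simp only [hφ, norm_mul, Complex.norm_real, Real.norm_eq_abs,
        Complex.norm_exp_ofReal_mul_I, mul_one, abs_mul, abs_of_pos (Real.exp_pos _)]
    have h2 : Real.exp (ξ / 2 - a * ξ ^ 2) = Real.exp (ξ / 2) * Real.exp (-a * ξ ^ 2) := by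
      rw [← Real.exp_add]; ring_nf
    rw [h1, h2]
    calc Real.exp (ξ / 2) * |W ξ| ≤ Real.exp (ξ / 2) * (M * Real.exp (-a * ξ ^ 2)) :=
          mul_le_mul_of_nonneg_left (hWb ξ) (Real.exp_pos _).le
      _ = M * (Real.exp (ξ / 2) * Real.exp (-a * ξ ^ 2)) := by ring
  have hφm : Measurable φ := by
    apply Measurable.mul
    · exact Complex.measurable_ofReal.comp
        ((Real.measurable_exp.comp (measurable_id.div_const 2)).mul hW)
    · exact Complex.measurable_exp.comp
        ((Complex.measurable_ofReal.comp (measurable_id.const_mul ((n : ℝ) * kstar)).neg).mul_const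
          Complex.I)
  -- the key region condition
  have hcond : ∀ Y : ℝ, Y < 0 → ∀ ξ : ℝ,
      (ξ < Y - Real.log (1 - Real.exp Y) ↔ h ξ < Y) := by
    intro Y hY ξ
    have hE : (0 : ℝ) < 1 - Real.exp Y := by
      have h1 : Real.exp Y < 1 := by rw [← Real.exp_zero]; exact Real.exp_lt_exp.2 hY
      linarith
    have hv : (0 : ℝ) < 1 + Real.exp (-ξ) := by positivity
    have hu : (0 : ℝ) < Real.exp Y := Real.exp_pos Y
    have huv : Real.exp Y * (Real.exp Y)⁻¹ = 1 := mul_inv_cancel₀ (ne_of_gt hu)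
    simp only [hh]
    constructor
    · intro hξ
      have h3 : 1 - Real.exp Y < Real.exp Y * Real.exp (-ξ) := by
        have := (Real.log_lt_iff_lt_exp hE).1 (show Real.log (1 - Real.exp Y) < Y - ξ by linarith)
        rwa [show Y - ξ = Y + -ξ from by ring, Real.exp_add] at this
      have h4 : Real.exp (-Y) < 1 + Real.exp (-ξ) := by
        rw [Real.exp_neg]
        nlinarith [Real.exp_pos (-ξ)]
      have h5 : -Y < Real.log (1 + Real.exp (-ξ)) := (Real.lt_log_iff_exp_lt hv).2 h4
      linarith
    · intro hξ
      have h5 : -Y < Real.log (1 + Real.exp (-ξ)) := by linarith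
      have h4 : Real.exp (-Y) < 1 + Real.exp (-ξ) := (Real.lt_log_iff_exp_lt hv).1 h5
      rw [Real.exp_neg] at h4
      have h3 : 1 - Real.exp Y < Real.exp (Y - ξ) := by
        rw [show Y - ξ = Y + -ξ from by ring, Real.exp_add]
        nlinarith [Real.exp_pos (-ξ)]
      have := (Real.log_lt_iff_lt_exp hE).2 h3
      linarith
  -- sections of F in Y
  have hsec : ∀ ξ : ℝ, (fun Y => F (Y, ξ)) =
      (Ioo (h ξ) 0).indicator
        (fun Y => φ ξ * Complex.exp (((K * Y : ℝ) : ℂ) * Complex.I)) := by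
    intro ξ
    funext Y
    simp only [hF]
    rw [Set.indicator_apply, Set.indicator_apply]
    simp only [mem_setOf_eq, mem_Ioo]
    by_cases h1 : Y < 0 <;> by_cases h2 : h ξ < Y <;> simp [h1, h2]
  -- measurability of the pieces of F
  have hfm : Measurable (fun q : ℝ × ℝ =>
      φ q.2 * Complex.exp (((K * q.1 : ℝ) : ℂ) * Complex.I)) := by
    apply (hφm.comp measurable_snd).mul
    exact Complex.measurable_exp.comp
      ((Complex.measurable_ofReal.comp (measurable_fst.const_mul K)).mul_const Complex.I)
  have hmh : Measurable h := by
    simp only [hh]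
    exact (Real.measurable_log.comp
      (measurable_const.add (Real.measurable_exp.comp measurable_neg))).neg
  have hS : MeasurableSet {q : ℝ × ℝ | q.1 < 0 ∧ h q.2 < q.1} := by
    have : {q : ℝ × ℝ | q.1 < 0 ∧ h q.2 < q.1}
        = {q : ℝ × ℝ | q.1 < 0} ∩ {q : ℝ × ℝ | h q.2 < q.1} := rfl
    rw [this]
    exact (measurableSet_lt measurable_fst measurable_const).inter
      (measurableSet_lt (hmh.comp measurable_snd) measurable_fst)
  have hFm : Measurable F := by
    simp only [hF]; exact hfm.indicator hS
  -- sections integrable in Y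
  have hsecint : ∀ ξ : ℝ, Integrable (fun Y => F (Y, ξ)) := by
    intro ξ
    rw [hsec ξ, integrable_indicator_iff measurableSet_Ioo]
    have hcont : Continuous fun Y : ℝ =>
        φ ξ * Complex.exp (((K * Y : ℝ) : ℂ) * Complex.I) := by
      fun_prop
    exact (hcont.continuousOn.integrableOn_compact isCompact_Icc).mono_set Ioo_subset_Icc_self
  -- closed form for the norm integral of the sections
  have hsecnorm : ∀ ξ : ℝ, (∫ Y : ℝ, ‖F (Y, ξ)‖) = Real.log (1 + Real.exp (-ξ)) * ‖φ ξ‖ := by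
    intro ξ
    have h1 : (fun Y : ℝ => ‖F (Y, ξ)‖) = (Ioo (h ξ) 0).indicator (fun _ => ‖φ ξ‖) := by
      funext Y
      rw [show F (Y, ξ) = _ from congrFun (hsec ξ) Y, norm_indicator_eq_indicator_norm]
      congr 1
      funext Y'
      rw [norm_mul]
      simp only [Complex.norm_exp_ofReal_mul_I, mul_one]
    rw [h1, integral_indicator measurableSet_Ioo, setIntegral_const, measureReal_def, Real.volume_Ioo,
      ENNReal.toReal_ofReal (by linarith [hhneg ξ] : (0:ℝ) ≤ 0 - h ξ), smul_eq_mul]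
    have h2 : (0:ℝ) - h ξ = Real.log (1 + Real.exp (-ξ)) := by simp [hh]
    rw [h2]
  -- integrability on the product
  have hFint : Integrable F (volume.prod volume) := by
    refine (integrable_prod_iff' hFm.aestronglyMeasurable).2 ⟨?_, ?_⟩
    · exact Filter.Eventually.of_forall hsecint
    · have heq : (fun ξ : ℝ => ∫ Y : ℝ, ‖F (Y, ξ)‖)
          = fun ξ => Real.log (1 + Real.exp (-ξ)) * ‖φ ξ‖ := funext hsecnorm
      rw [heq]
      apply Integrable.mono' (hI₁int.const_mul M)
      · exact ((Real.measurable_log.comp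
          (measurable_const.add (Real.measurable_exp.comp measurable_neg))).mul
            hφm.norm).aestronglyMeasurable
      · refine Filter.Eventually.of_forall fun ξ => ?_
        have hlognn : 0 ≤ Real.log (1 + Real.exp (-ξ)) :=
          Real.log_nonneg (by nlinarith [Real.exp_pos (-ξ)])
        rw [Real.norm_eq_abs, abs_of_nonneg (mul_nonneg hlognn (norm_nonneg _))]
        have hlog : Real.log (1 + Real.exp (-ξ)) ≤ Real.exp (-ξ) := by
          have := hhle ξ; simp only [hh, neg_neg] at this; exact this
        have hprod : Real.exp (-ξ) * Real.exp (ξ / 2 - a * ξ ^ 2)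
            = Real.exp (-(1/2) * ξ - a * ξ ^ 2) := by
          rw [← Real.exp_add]; congr 1; ring
        calc Real.log (1 + Real.exp (-ξ)) * ‖φ ξ‖
            ≤ Real.exp (-ξ) * (M * Real.exp (ξ / 2 - a * ξ ^ 2)) :=
              mul_le_mul hlog (hφnorm ξ) (norm_nonneg _) (Real.exp_pos _).le
          _ = M * Real.exp (-(1/2) * ξ - a * ξ ^ 2) := by rw [← hprod]; ring
  -- Step 1 : J as an unrestricted double integral
  have step1 : coagJmn W kstar m n = ∫ Y : ℝ, ∫ ξ : ℝ, F (Y, ξ) := by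
    rw [coagJmn, ← integral_indicator measurableSet_Iio]
    congr 1
    funext Y
    rw [Set.indicator_apply]
    split_ifs with hY
    · have hY' : Y < 0 := hY
      have hsub := coag_sub (fun ξ => ((Real.exp (ξ / 2) * W ξ : ℝ) : ℂ) *
          Complex.exp (Complex.I * (((m : ℝ) * kstar : ℝ) : ℂ) * (Y : ℂ)) *
          Complex.exp (Complex.I * (((n : ℝ) * kstar : ℝ) : ℂ) * ((Y - ξ : ℝ) : ℂ)))
        Y (Real.log (1 - Real.exp Y))
      simp only [sub_sub_cancel] at hsub
      rw [hsub]
      have hg : ∀ ξ : ℝ, ((Real.exp (ξ / 2) * W ξ : ℝ) : ℂ) *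
          Complex.exp (Complex.I * (((m : ℝ) * kstar : ℝ) : ℂ) * (Y : ℂ)) *
          Complex.exp (Complex.I * (((n : ℝ) * kstar : ℝ) : ℂ) * ((Y - ξ : ℝ) : ℂ))
          = φ ξ * Complex.exp (((K * Y : ℝ) : ℂ) * Complex.I) := by
        intro ξ
        simp only [hφ]
        have hkey : ∀ (r z1 z2 z3 z4 : ℂ), z1 + z2 = z3 + z4 →
            r * Complex.exp z1 * Complex.exp z2 = r * Complex.exp z3 * Complex.exp z4 := by
          intro r z1 z2 z3 z4 hz
          rw [mul_assoc, mul_assoc, ← Complex.exp_add, ← Complex.exp_add, hz]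
        apply hkey
        rw [hK]
        push_cast
        ring
      simp only [hg]
      rw [← integral_indicator measurableSet_Iio]
      congr 1
      funext ξ
      rw [Set.indicator_apply]
      simp only [hF]
      rw [Set.indicator_apply]
      simp only [mem_Iio, mem_setOf_eq]
      have hcd := hcond Y hY' ξ
      by_cases hc : ξ < Y - Real.log (1 - Real.exp Y)
      · rw [if_pos hc, if_pos ⟨hY', hcd.1 hc⟩]
      · rw [if_neg hc, if_neg fun hmem => hc (hcd.2 hmem.2)]
    · have hzero : ∀ ξ : ℝ, F (Y, ξ) = 0 := by
        intro ξ
        simp only [hF]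
        rw [Set.indicator_apply, if_neg]
        exact fun hmem => hY hmem.1
      simp [hzero]
  -- Step 2 : Fubini
  have step2 : (∫ Y : ℝ, ∫ ξ : ℝ, F (Y, ξ)) = ∫ ξ : ℝ, ∫ Y : ℝ, F (Y, ξ) :=
    integral_integral_swap (f := fun Y ξ => F (Y, ξ)) hFint
  -- Step 3 : compute the inner integral
  have step3 : ∀ ξ : ℝ, (∫ Y : ℝ, F (Y, ξ))
      = φ ξ * ∫ Y in Ioo (h ξ) 0, Complex.exp (((K * Y : ℝ) : ℂ) * Complex.I) := by
    intro ξ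
    rw [hsec ξ, integral_indicator measurableSet_Ioo, integral_const_mul]
  rw [step1, step2]
  simp only [step3]
  by_cases hl : (m + n : ℤ) = 0
  · -- zero frequency
    have hK0 : K = 0 := by rw [hK, hl]; simp
    have hEξ : ∀ ξ : ℝ, (∫ Y in Ioo (h ξ) 0, Complex.exp (((K * Y : ℝ) : ℂ) * Complex.I))
        = ((-h ξ : ℝ) : ℂ) := by
      intro ξ
      simp only [hK0, zero_mul, Complex.ofReal_zero, Complex.exp_zero]
      rw [setIntegral_const, measureReal_def, Real.volume_Ioo,
        ENNReal.toReal_ofReal (by linarith [hhneg ξ] : (0:ℝ) ≤ 0 - h ξ)]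
      simp [Complex.real_smul]
    simp only [hEξ]
    refine le_trans (norm_integral_le_of_norm_le (hI₁int.const_mul M)
      (Filter.Eventually.of_forall fun ξ => ?_)) ?_
    · have h1 : ‖φ ξ * ((-h ξ : ℝ) : ℂ)‖ = ‖φ ξ‖ * |(-h ξ : ℝ)| := by
        rw [norm_mul, Complex.norm_real, Real.norm_eq_abs]
      rw [h1, abs_of_nonneg (by linarith [hhneg ξ] : (0:ℝ) ≤ -h ξ)]
      have hprod : Real.exp (ξ / 2 - a * ξ ^ 2) * Real.exp (-ξ)
          = Real.exp (-(1/2) * ξ - a * ξ ^ 2) := by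
        rw [← Real.exp_add]; congr 1; ring
      calc ‖φ ξ‖ * -h ξ ≤ (M * Real.exp (ξ / 2 - a * ξ ^ 2)) * Real.exp (-ξ) :=
            mul_le_mul (hφnorm ξ) (hhle ξ) (by linarith [hhneg ξ]) (by positivity)
        _ = M * Real.exp (-(1/2) * ξ - a * ξ ^ 2) := by rw [← hprod]; ring
    · rw [integral_const_mul]
      have : |((m + n : ℤ) : ℝ)| = 0 := by rw [hl]; simp
      rw [this]
      have h4 : 0 ≤ 4 / kstar * I₂ := by positivity
      rw [add_zero, div_one]
      nlinarith
  · -- nonzero frequency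
    have hL1 : (1:ℝ) ≤ |((m + n : ℤ) : ℝ)| := by
      have := Int.one_le_abs (by exact hl : (m + n : ℤ) ≠ 0)
      calc (1:ℝ) = ((1:ℤ):ℝ) := by norm_num
        _ ≤ ((|m + n| : ℤ) : ℝ) := by exact_mod_cast this
        _ = |((m + n : ℤ) : ℝ)| := by push_cast; ring
    set L : ℝ := |((m + n : ℤ) : ℝ)| with hLdef
    have hL0 : 0 < L := by linarith
    have hKne : K ≠ 0 := by
      rw [hK]
      exact mul_ne_zero (Int.cast_ne_zero.2 hl) (ne_of_gt hk)
    have hKabs : |K| = L * kstar := by rw [hK, abs_mul, abs_of_pos hk, hLdef]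
    have hEξ : ∀ ξ : ℝ, ‖∫ Y in Ioo (h ξ) 0, Complex.exp (((K * Y : ℝ) : ℂ) * Complex.I)‖
        ≤ 2 / (L * kstar) := by
      intro ξ
      have hintg : ∀ Y : ℝ, Complex.exp (((K * Y : ℝ) : ℂ) * Complex.I)
          = Complex.exp (Complex.I * (K : ℂ) * (Y : ℂ)) := by
        intro Y; congr 1; push_cast; ring
      simp only [hintg]
      rw [coag_exp_int K (h ξ) hKne (hhneg ξ).le, norm_div]
      have h1 : ‖Complex.I * (K : ℂ)‖ = |K| := by
        simp
      have h2 : ‖(1:ℂ) - Complex.exp (Complex.I * (K : ℂ) * ((h ξ : ℝ) : ℂ))‖ ≤ 2 := by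
        refine le_trans (norm_sub_le _ _) ?_
        have h3 : ‖Complex.exp (Complex.I * (K : ℂ) * ((h ξ : ℝ) : ℂ))‖ = 1 := by
          rw [show Complex.I * (K : ℂ) * ((h ξ : ℝ) : ℂ)
              = ((K * h ξ : ℝ) : ℂ) * Complex.I from by push_cast; ring]
          simp only [Complex.norm_exp_ofReal_mul_I]
        rw [h3]
        norm_num
      rw [h1, hKabs]
      have hpos : 0 < L * kstar := by positivity
      gcongr
    refine le_trans (norm_integral_le_of_norm_le
      ((hI₂int.const_mul M).const_mul (2 / (L * kstar)))
      (Filter.Eventually.of_forall fun ξ => ?_)) ?_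
    · rw [norm_mul]
      calc ‖φ ξ‖ * ‖∫ Y in Ioo (h ξ) 0, Complex.exp (((K * Y : ℝ) : ℂ) * Complex.I)‖
          ≤ (M * Real.exp (ξ / 2 - a * ξ ^ 2)) * (2 / (L * kstar)) :=
            mul_le_mul (hφnorm ξ) (hEξ ξ) (norm_nonneg _) (by positivity)
        _ = 2 / (L * kstar) * (M * Real.exp (ξ / 2 - a * ξ ^ 2)) := by ring
        _ = 2 / (L * kstar) * (M * Real.exp (1/2 * ξ - a * ξ ^ 2)) := by ring_nf
    · rw [integral_const_mul, integral_const_mul]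
      rw [div_mul_eq_mul_div, div_le_div_iff₀ (by positivity : (0:ℝ) < L * kstar)
        (by linarith : (0:ℝ) < 1 + L)]
      have hCk : (I₁ + 4 / kstar * I₂) * (L * kstar) = I₁ * L * kstar + 4 * I₂ * L := by
        field_simp
      rw [show (I₁ + 4 / kstar * I₂) * M * (L * kstar)
          = M * ((I₁ + 4 / kstar * I₂) * (L * kstar)) from by ring, hCk]
      nlinarith [mul_nonneg (mul_nonneg hM.le hI₂0) (sub_nonneg.2 hL1),
        mul_nonneg (mul_nonneg (mul_nonneg hM.le hI₁0) hL0.le) hk.le]
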